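/- arXiv:2402.05074 — 2 statements merged into one kernel-verified Lean document; each statement's English description precedes it below -/
import Mathlib

section
/- (Intermediate inequality Eq. (11) in the proof of Theorem 3.) Let d ≥ 1, let ρ₁, ρ₂ be density matrices on ℂ^d, let p₁, p₂ ≥ 0 with p₁ + p₂ = 1, let R ≥ 0, and define σᵢ := (1+R)⁻¹ · (ρᵢ + (R/d) · I) for i = 1, 2. Then ‖p₁·ρ₁ − p₂·ρ₂‖₁ − ‖p₁·σ₁ − p₂·σ₂‖₁ ≥ (R/(1+R)) · (‖p₁·ρ₁ − p₂·ρ₂‖₁ − |p₁ − p₂|). -/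
open Matrix
open scoped ComplexOrder

/-- A density matrix: positive semidefinite with unit trace. -/
def IsDensityMatrix {n : Type*} [Fintype n] [DecidableEq n] (ρ : Matrix n n ℂ) : Prop :=
  ρ.PosSemidef ∧ ρ.trace = 1

/-- The positive semidefinite square root, as `Matrix.PosSemidef.sqrt` was defined in the older
Mathlib (removed since). -/
noncomputable def Matrix.PosSemidef.sqrt {n : Type*} [Fintype n] [DecidableEq n]
    {A : Matrix n n ℂ} (hA : A.PosSemidef) : Matrix n n ℂ :=
  (hA.1.eigenvectorUnitary : Matrix n n ℂ) *
    diagonal (fun i => ((Real.sqrt (hA.1.eigenvalues i) : ℝ) : ℂ)) *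
    (star hA.1.eigenvectorUnitary : Matrix n n ℂ)

/-- The trace norm of a complex matrix: the trace of the positive semidefinite
square root of `Aᴴ * A`. -/
noncomputable def traceNorm {n : Type*} [Fintype n] [DecidableEq n]
    (A : Matrix n n ℂ) : ℝ :=
  ((Matrix.posSemidef_conjTranspose_mul_self A).sqrt.trace).re

/-!
With `X = p₁ • ρ₁ - p₂ • ρ₂` one has `p₁ • σ₁ - p₂ • σ₂ = (1 + R)⁻¹ • (X + c • 1)` where
`c = R / d * (p₁ - p₂)`. Diagonalising the Hermitian matrix `X` by a unitary, its trace norm is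
the sum of the absolute values of its eigenvalues, and shifting every eigenvalue by `c` raises
that sum by at most `d * |c| = R * |p₁ - p₂|`. The claimed inequality is a rearrangement of
`‖p₁ • σ₁ - p₂ • σ₂‖₁ ≤ (1 + R)⁻¹ * (‖X‖₁ + R * |p₁ - p₂|)`.
-/

namespace Matrix.PosSemidef

open scoped MatrixOrder

variable {n : Type*} [Fintype n] [DecidableEq n] {A : Matrix n n ℂ}

theorem sqrt_eq_cfcSqrt (hA : A.PosSemidef) : hA.sqrt = CFC.sqrt A := by
  rw [CFC.sqrt_eq_real_sqrt A hA.nonneg, cfcₙ_eq_cfc, hA.1.cfc_eq]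
  simp [IsHermitian.cfc, Matrix.PosSemidef.sqrt, Function.comp_def]

theorem posSemidef_sqrt (hA : A.PosSemidef) : hA.sqrt.PosSemidef := by
  rw [sqrt_eq_cfcSqrt]
  exact (CFC.sqrt_nonneg A).posSemidef

theorem sqrt_eq_of_mul_self_eq (hA : A.PosSemidef) {S : Matrix n n ℂ} (hS : S.PosSemidef)
    (h : S * S = A) : hA.sqrt = S := by
  rw [sqrt_eq_cfcSqrt]
  exact CFC.sqrt_unique h hS.nonneg

theorem sqrt_mul_self (hA : A.PosSemidef) : hA.sqrt * hA.sqrt = A := by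
  rw [sqrt_eq_cfcSqrt]
  exact CFC.sqrt_mul_sqrt_self A hA.nonneg

end Matrix.PosSemidef

section
variable {n : Type*} [Fintype n] [DecidableEq n]

theorem traceNorm_eq_re_trace_of_mul_self_eq {A S : Matrix n n ℂ} (hS : S.PosSemidef)
    (h : S * S = Aᴴ * A) : traceNorm A = S.trace.re := by
  rw [traceNorm, PosSemidef.sqrt_eq_of_mul_self_eq _ hS h]

theorem traceNorm_smul (t : ℝ) (A : Matrix n n ℂ) : traceNorm (t • A) = |t| * traceNorm A := by
  have hA := posSemidef_conjTranspose_mul_self A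
  rw [traceNorm_eq_re_trace_of_mul_self_eq (S := |t| • hA.sqrt)
    (hA.posSemidef_sqrt.smul (abs_nonneg t))]
  · simp [traceNorm]
  · rw [smul_mul_smul, hA.sqrt_mul_self, conjTranspose_smul, smul_mul_smul, star_trivial, ← sq,
      sq_abs, sq]

theorem traceNorm_conjStarAlgAut (U : unitary (Matrix n n ℂ)) (A : Matrix n n ℂ) :
    traceNorm (Unitary.conjStarAlgAut ℂ _ U A) = traceNorm A := by
  have hA := posSemidef_conjTranspose_mul_self A
  rw [traceNorm_eq_re_trace_of_mul_self_eq (S := Unitary.conjStarAlgAut ℂ _ U hA.sqrt)]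
  · simp [traceNorm, Unitary.conjStarAlgAut_apply, trace_mul_cycle]
  · rw [Unitary.conjStarAlgAut_apply]
    exact hA.posSemidef_sqrt.mul_mul_conjTranspose_same _
  · rw [← map_mul, hA.sqrt_mul_self, ← star_eq_conjTranspose, ← star_eq_conjTranspose, map_mul,
      map_star]

theorem traceNorm_diagonal (f : n → ℂ) : traceNorm (diagonal f) = ∑ i, ‖f i‖ := by
  rw [traceNorm_eq_re_trace_of_mul_self_eq (S := diagonal fun i => (‖f i‖ : ℂ))]
  · simp [trace_diagonal]
  · exact posSemidef_diagonal_iff.mpr fun i => by positivity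
  · simp [diagonal_mul_diagonal, Complex.conj_mul', sq]
end

namespace Matrix.IsHermitian

variable {n : Type*} [Fintype n] [DecidableEq n] {A : Matrix n n ℂ}

theorem traceNorm_eq_sum_abs_eigenvalues (hA : A.IsHermitian) :
    traceNorm A = ∑ i, |hA.eigenvalues i| := by
  conv_lhs => rw [hA.spectral_theorem]
  simp only [traceNorm_conjStarAlgAut, traceNorm_diagonal, Function.comp_apply,
    RCLike.norm_ofReal]

theorem traceNorm_add_smul_one_le (hA : A.IsHermitian) (c : ℝ) :
    traceNorm (A + c • 1) ≤ traceNorm A + Fintype.card n * |c| := by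
  have hshift : A + c • 1 = Unitary.conjStarAlgAut ℂ _ hA.eigenvectorUnitary
      (diagonal fun i => ((hA.eigenvalues i + c : ℝ) : ℂ)) := by
    have hdiag : (diagonal fun i => ((hA.eigenvalues i + c : ℝ) : ℂ)) =
        diagonal (RCLike.ofReal ∘ hA.eigenvalues) + c • 1 := by
      ext i j
      rcases eq_or_ne i j with rfl | hij <;> simp [*]
    rw [hdiag, map_add, LinearMapClass.map_smul_of_tower, map_one, ← hA.spectral_theorem]
  rw [hshift, traceNorm_conjStarAlgAut, traceNorm_diagonal, hA.traceNorm_eq_sum_abs_eigenvalues]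
  calc ∑ i, ‖((hA.eigenvalues i + c : ℝ) : ℂ)‖ ≤ ∑ i, (|hA.eigenvalues i| + |c|) := by
        gcongr with i
        rw [Complex.norm_real, Real.norm_eq_abs]
        exact abs_add_le _ _
    _ = ∑ i, |hA.eigenvalues i| + Fintype.card n * |c| := by
        simp [Finset.sum_add_distrib]

end Matrix.IsHermitian

theorem stmt7_general {d : ℕ} (hd : 1 ≤ d)
    (ρ₁ ρ₂ : Matrix (Fin d) (Fin d) ℂ)
    (hρ₁ : IsDensityMatrix ρ₁) (hρ₂ : IsDensityMatrix ρ₂)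
    (p₁ p₂ : ℝ)
    (R : ℝ) (hR : 0 ≤ R)
    (σ₁ σ₂ : Matrix (Fin d) (Fin d) ℂ)
    (hσ₁ : σ₁ = ((1 + R)⁻¹ : ℝ) • (ρ₁ + ((R / d : ℝ)) • (1 : Matrix (Fin d) (Fin d) ℂ)))
    (hσ₂ : σ₂ = ((1 + R)⁻¹ : ℝ) • (ρ₂ + ((R / d : ℝ)) • (1 : Matrix (Fin d) (Fin d) ℂ))) :
    traceNorm (p₁ • ρ₁ - p₂ • ρ₂) - traceNorm (p₁ • σ₁ - p₂ • σ₂) ≥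
      (R / (1 + R)) * (traceNorm (p₁ • ρ₁ - p₂ • ρ₂) - |p₁ - p₂|) := by
  set X := p₁ • ρ₁ - p₂ • ρ₂
  have hX : X.IsHermitian :=
    (hρ₁.1.1.smul (IsSelfAdjoint.all p₁)).sub (hρ₂.1.1.smul (IsSelfAdjoint.all p₂))
  have hσ : p₁ • σ₁ - p₂ • σ₂ = (1 + R)⁻¹ • (X + (R / d * (p₁ - p₂)) • 1) := by
    subst hσ₁ hσ₂
    module
  have hd₀ : (d : ℝ) ≠ 0 := by positivity
  have hbound : traceNorm (p₁ • σ₁ - p₂ • σ₂) ≤ (1 + R)⁻¹ * (traceNorm X + R * |p₁ - p₂|) := by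
    rw [hσ, traceNorm_smul, abs_of_pos (by positivity)]
    gcongr
    calc traceNorm (X + (R / d * (p₁ - p₂)) • 1)
        ≤ traceNorm X + d * |R / d * (p₁ - p₂)| := by
          simpa using hX.traceNorm_add_smul_one_le (R / d * (p₁ - p₂))
      _ = traceNorm X + R * |p₁ - p₂| := by
          rw [abs_mul, abs_div, Nat.abs_cast, abs_of_nonneg hR]
          field_simp
  have hR₁ : 1 + R ≠ 0 := by positivity
  have hgain : traceNorm X - (1 + R)⁻¹ * (traceNorm X + R * |p₁ - p₂|) =
      R / (1 + R) * (traceNorm X - |p₁ - p₂|) := by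
    field_simp
    ring
  linarith

theorem stmt7 {d : ℕ} (hd : 1 ≤ d)
    (ρ₁ ρ₂ : Matrix (Fin d) (Fin d) ℂ)
    (hρ₁ : IsDensityMatrix ρ₁) (hρ₂ : IsDensityMatrix ρ₂)
    (p₁ p₂ : ℝ) (hp₁ : 0 ≤ p₁) (hp₂ : 0 ≤ p₂) (hp : p₁ + p₂ = 1)
    (R : ℝ) (hR : 0 ≤ R)
    (σ₁ σ₂ : Matrix (Fin d) (Fin d) ℂ)
    (hσ₁ : σ₁ = ((1 + R)⁻¹ : ℝ) • (ρ₁ + ((R / d : ℝ)) • (1 : Matrix (Fin d) (Fin d) ℂ)))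
    (hσ₂ : σ₂ = ((1 + R)⁻¹ : ℝ) • (ρ₂ + ((R / d : ℝ)) • (1 : Matrix (Fin d) (Fin d) ℂ))) :
    traceNorm (p₁ • ρ₁ - p₂ • ρ₂) - traceNorm (p₁ • σ₁ - p₂ • σ₂) ≥
      (R / (1 + R)) * (traceNorm (p₁ • ρ₁ - p₂ • ρ₂) - |p₁ - p₂|) :=
  stmt7_general hd ρ₁ ρ₂ hρ₁ hρ₂ p₁ p₂ R hR σ₁ σ₂ hσ₁ hσ₂
end

section
/- (Random robustness of entanglement of a Bell state equals 2.) In ℂ²⊗ℂ² (matrices indexed by Fin 2 × Fin 2), let ρ = |φ⁺⟩⟨φ⁺| be the projector onto the Bell state |φ⁺⟩ = (|00⟩+|11⟩)/√2, and for r ≥ 0 define σ(r) := (1+r)⁻¹ · (ρ + (r/4) · I). Then σ(2) = (ρ + I/2)/3 is separable, while for every r with 0 ≤ r < 2 the matrix σ(r) is not separable; consequently sInf { r : ℝ | r ≥ 0 ∧ σ(r) is separable } = 2. -/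
open Matrix
open scoped ComplexOrder Kronecker

/-- A two-qubit state is separable if it is a convex combination of product
density matrices. -/
def IsSepState (ρ : Matrix (Fin 2 × Fin 2) (Fin 2 × Fin 2) ℂ) : Prop :=
  ρ ∈ convexHull ℝ { X | ∃ A : Matrix (Fin 2) (Fin 2) ℂ, ∃ C : Matrix (Fin 2) (Fin 2) ℂ,
    IsDensityMatrix A ∧ IsDensityMatrix C ∧ X = A ⊗ₖ C }

/-- The Bell state `|φ⁺⟩ = (|00⟩ + |11⟩)/√2` as a vector in `ℂ² ⊗ ℂ²`. -/
noncomputable def phiPlus : Fin 2 × Fin 2 → ℂ := fun x =>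
  if x = (0, 0) then (Real.sqrt 2)⁻¹ else if x = (1, 1) then (Real.sqrt 2)⁻¹ else 0

/-! At `r = 2` the state is an average of product states: writing
`|φ⁺⟩⟨φ⁺| = (I ⊗ I + X ⊗ X - Y ⊗ Y + Z ⊗ Z) / 4` in the Pauli basis, averaging `|u⟩⟨u| ⊗ |ū⟩⟨ū|`
over the six eigenvectors `u` of `X`, `Y` and `Z` gives `(I + 2 |φ⁺⟩⟨φ⁺|) / 6 = σ(2)`.
For `r < 2` we use the Peres criterion: the partial transpose of a separable state is positive
semidefinite, whereas the singlet `|01⟩ - |10⟩` is an eigenvector of the partial transpose of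
`σ(r)` with eigenvalue `(r / 4 - 1 / 2) / (1 + r) < 0`. -/

namespace Matrix

variable {m n R : Type*}

def partialTranspose (M : Matrix (m × n) (m × n) R) : Matrix (m × n) (m × n) R :=
  of fun i j => M (i.1, j.2) (j.1, i.2)

@[simp]
lemma partialTranspose_apply (M : Matrix (m × n) (m × n) R) (i j : m × n) :
    M.partialTranspose i j = M (i.1, j.2) (j.1, i.2) := rfl

@[simp]
lemma partialTranspose_add [Add R] (M N : Matrix (m × n) (m × n) R) :
    (M + N).partialTranspose = M.partialTranspose + N.partialTranspose := rfl

@[simp]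
lemma partialTranspose_smul {S : Type*} [SMul S R] (c : S) (M : Matrix (m × n) (m × n) R) :
    (c • M).partialTranspose = c • M.partialTranspose := rfl

lemma partialTranspose_kronecker [Mul R] (A : Matrix m m R) (B : Matrix n n R) :
    (A ⊗ₖ B).partialTranspose = A ⊗ₖ Bᵀ := rfl

theorem posSemidef_partialTranspose_of_mem_convexHull {𝕜 : Type*} [RCLike 𝕜] [Fintype m]
    [Fintype n] {M : Matrix (m × n) (m × n) 𝕜}
    (hM : M ∈ convexHull ℝ {X | ∃ (A : Matrix m m 𝕜) (B : Matrix n n 𝕜),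
      A.PosSemidef ∧ B.PosSemidef ∧ X = A ⊗ₖ B}) :
    M.partialTranspose.PosSemidef := by
  refine convexHull_min (t := {X | X.partialTranspose.PosSemidef}) ?_ ?_ hM
  · rintro _ ⟨A, B, hA, hB, rfl⟩
    rw [Set.mem_ofPred_eq, partialTranspose_kronecker]
    exact hA.kronecker hB.transpose
  · intro X hX Y hY a b ha hb _
    simpa using (hX.smul ha).add (hY.smul hb)

lemma star_sub_single_dotProduct_mulVec [Fintype n] [DecidableEq n] [Ring R] [StarRing R]
    (M : Matrix n n R) (a b : n) :
    star (Pi.single a 1 - Pi.single b 1) ⬝ᵥ M *ᵥ (Pi.single a 1 - Pi.single b 1)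
      = M a a - M a b - M b a + M b b := by
  simp only [star_sub, Pi.star_single, star_one, mulVec_sub, mulVec_single, MulOpposite.op_one,
    one_smul, dotProduct_sub, sub_dotProduct, single_dotProduct, col_apply, one_mul]
  abel

end Matrix

section PureState

variable {n : Type*} [Fintype n]

noncomputable def pureState (v : n → ℂ) : Matrix n n ℂ :=
  (star v ⬝ᵥ v)⁻¹ • vecMulVec v (star v)

lemma pureState_apply (v : n → ℂ) (i j : n) :
    pureState v i j = v i * star (v j) / (star v ⬝ᵥ v) := by
  simp [pureState, vecMulVec_apply, div_eq_inv_mul]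

lemma pureState_star (v : n → ℂ) : pureState (star v) = (pureState v)ᵀ := by
  ext i j
  simp [pureState_apply, dotProduct_comm v, mul_comm]

lemma isDensityMatrix_pureState [DecidableEq n] {v : n → ℂ} (hv : v ≠ 0) :
    IsDensityMatrix (pureState v) := by
  refine ⟨(posSemidef_vecMulVec_self_star v).smul
    (inv_nonneg.2 (dotProduct_star_self_nonneg v)), ?_⟩
  rw [pureState, trace_smul, trace_vecMulVec, dotProduct_comm v, smul_eq_mul,
    inv_mul_cancel₀ (dotProduct_star_self_eq_zero.not.2 hv)]

end PureState

theorem IsSepState.posSemidef_partialTranspose {ρ : Matrix (Fin 2 × Fin 2) (Fin 2 × Fin 2) ℂ}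
    (h : IsSepState ρ) : ρ.partialTranspose.PosSemidef := by
  refine posSemidef_partialTranspose_of_mem_convexHull (convexHull_mono ?_ h)
  rintro _ ⟨A, C, hA, hC, rfl⟩
  exact ⟨A, C, hA.1, hC.1, rfl⟩

lemma phiPlus_apply (x : Fin 2 × Fin 2) :
    phiPlus x = if x.1 = x.2 then ((Real.sqrt 2 : ℂ))⁻¹ else 0 := by
  fin_cases x <;> simp [phiPlus]

lemma vecMulVec_phiPlus_apply (x y : Fin 2 × Fin 2) :
    vecMulVec phiPlus (star phiPlus) x y = if x.1 = x.2 ∧ y.1 = y.2 then 1 / 2 else 0 := by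
  have : ((Real.sqrt 2 : ℂ))⁻¹ * ((Real.sqrt 2 : ℂ))⁻¹ = 1 / 2 := by
    rw [← mul_inv, ← Complex.ofReal_mul, Real.mul_self_sqrt zero_le_two]
    norm_num
  simp only [vecMulVec_apply, Pi.star_apply, phiPlus_apply]
  split_ifs <;> simp_all [Complex.conj_ofReal]

noncomputable def isotropicState (r : ℝ) : Matrix (Fin 2 × Fin 2) (Fin 2 × Fin 2) ℂ :=
  ((1 + r)⁻¹ : ℝ) • (vecMulVec phiPlus (star phiPlus) + (r / 4 : ℝ) • 1)

theorem not_posSemidef_partialTranspose_isotropicState {r : ℝ} (h₁ : -1 < r) (h₂ : r < 2) :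
    ¬ (isotropicState r).partialTranspose.PosSemidef := by
  intro h
  have hw := h.dotProduct_mulVec_nonneg (Pi.single (0, 1) 1 - Pi.single (1, 0) 1)
  have hval : star (Pi.single (0, 1) 1 - Pi.single (1, 0) 1) ⬝ᵥ
      (isotropicState r).partialTranspose *ᵥ (Pi.single (0, 1) 1 - Pi.single (1, 0) 1) =
      (((1 + r)⁻¹ * (r / 2 - 1) : ℝ) : ℂ) := by
    rw [star_sub_single_dotProduct_mulVec]
    simp only [isotropicState, partialTranspose_apply, Matrix.smul_apply, Matrix.add_apply,
      vecMulVec_phiPlus_apply, one_apply]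
    norm_num
    ring
  rw [hval, Complex.zero_le_real] at hw
  have : (1 + r)⁻¹ * (r / 2 - 1) < 0 :=
    mul_neg_of_pos_of_neg (inv_pos.2 (by linarith)) (by linarith)
  linarith

theorem not_isSepState_isotropicState {r : ℝ} (h₁ : -1 < r) (h₂ : r < 2) :
    ¬ IsSepState (isotropicState r) := fun h =>
  not_posSemidef_partialTranspose_isotropicState h₁ h₂ h.posSemidef_partialTranspose

def pauliEigenvector : Fin 6 → Fin 2 → ℂ :=
  ![![1, 0], ![0, 1], ![1, 1], ![1, -1], ![1, Complex.I], ![1, -Complex.I]]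

lemma star_dotProduct_pauliEigenvector (k : Fin 6) :
    star (pauliEigenvector k) ⬝ᵥ pauliEigenvector k = ![1, 1, 2, 2, 2, 2] k := by
  fin_cases k <;> norm_num [pauliEigenvector, dotProduct, Fin.sum_univ_two]

lemma pauliEigenvector_ne_zero (k : Fin 6) : pauliEigenvector k ≠ 0 := by
  rw [Ne, ← dotProduct_star_self_eq_zero, star_dotProduct_pauliEigenvector]
  fin_cases k <;> simp

lemma isotropicState_two_eq_sum :
    isotropicState 2 = ∑ k, (6⁻¹ : ℝ) •
      (pureState (pauliEigenvector k) ⊗ₖ pureState (star (pauliEigenvector k))) := by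
  ext ⟨a, b⟩ ⟨c, d⟩
  simp only [Matrix.sum_apply, Matrix.smul_apply, Fin.sum_univ_six, kronecker_apply,
    pureState_apply, pureState_star, transpose_apply, star_dotProduct_pauliEigenvector]
  fin_cases a <;> fin_cases b <;> fin_cases c <;> fin_cases d <;>
    simp [isotropicState, vecMulVec_phiPlus_apply, one_apply, pauliEigenvector] <;>
    ring_nf <;> norm_num

theorem isSepState_isotropicState_two : IsSepState (isotropicState 2) := by
  rw [IsSepState, isotropicState_two_eq_sum]
  refine (convex_convexHull ℝ _).sum_mem (fun _ _ => by norm_num) (by norm_num)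
    fun k _ => subset_convexHull ℝ _ ⟨_, _, isDensityMatrix_pureState (pauliEigenvector_ne_zero k),
      isDensityMatrix_pureState (star_ne_zero.2 (pauliEigenvector_ne_zero k)), rfl⟩

theorem stmt10
    (ρ : Matrix (Fin 2 × Fin 2) (Fin 2 × Fin 2) ℂ)
    (hρ : ρ = vecMulVec phiPlus (star phiPlus))
    (σ : ℝ → Matrix (Fin 2 × Fin 2) (Fin 2 × Fin 2) ℂ)
    (hσ : ∀ r : ℝ, σ r = ((1 + r)⁻¹ : ℝ) •
      (ρ + ((r / 4 : ℝ)) • (1 : Matrix (Fin 2 × Fin 2) (Fin 2 × Fin 2) ℂ))) :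
    (σ 2 = ((3 : ℝ)⁻¹) • (ρ + ((2 : ℝ)⁻¹) • (1 : Matrix (Fin 2 × Fin 2) (Fin 2 × Fin 2) ℂ)) ∧
        IsSepState (σ 2)) ∧
      (∀ r : ℝ, 0 ≤ r → r < 2 → ¬ IsSepState (σ r)) ∧
      sInf { r : ℝ | 0 ≤ r ∧ IsSepState (σ r) } = 2 := by
  subst hρ
  obtain rfl : σ = isotropicState := funext hσ
  have hnot (r : ℝ) (hr : 0 ≤ r) : r < 2 → ¬ IsSepState (isotropicState r) :=
    not_isSepState_isotropicState (by linarith)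
  refine ⟨⟨by norm_num [isotropicState], isSepState_isotropicState_two⟩, hnot,
    IsLeast.csInf_eq ⟨⟨zero_le_two, isSepState_isotropicState_two⟩, ?_⟩⟩
  rintro r ⟨hr, hsep⟩
  by_contra! h
  exact hnot r hr h hsep
end
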